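/- arXiv:1709.03451 — 3 statements merged into one kernel-verified Lean document; each statement's English description precedes it below -/
import Mathlib

section
/- Let P ⊂ ℝ² be a lattice polygon with e_□(P) = l. Suppose Δ_P(x+y) ≥ l and Δ_P(x−y) ≥ l. Then for all nonzero integers a and b, Δ_P(ax+by) ≥ l·min(|a|,|b|). -/
/-- The lattice polygon determined by a nonempty finite set `V` of lattice points:
the convex hull in `ℝ²` of the corresponding real points. -/
def latticePoly2 (V : Finset (Fin 2 → ℤ)) : Set (Fin 2 → ℝ) :=
  convexHull ℝ ((fun v : Fin 2 → ℤ => fun i => (v i : ℝ)) '' (V : Set (Fin 2 → ℤ)))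

/-- `Δ_P(a₀·x + a₁·y) = w_a(P)`, the lattice width of `P ⊆ ℝ²` in the direction `a ∈ ℤ²`:
the sup minus the inf of the linear form `p ↦ a·p` over `P`. -/
noncomputable def width2 (P : Set (Fin 2 → ℝ)) (a : Fin 2 → ℤ) : ℝ :=
  sSup ((fun p => ∑ i, (a i : ℝ) * p i) '' P) - sInf ((fun p => ∑ i, (a i : ℝ) * p i) '' P)

/-- `T(P) ⊆ [0,l]²` for some affine unimodular transformation `T : p ↦ A·p + v`. -/
def FitsInSquare (P : Set (Fin 2 → ℝ)) (l : ℤ) : Prop :=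
  ∃ (A : Matrix (Fin 2) (Fin 2) ℤ) (v : Fin 2 → ℤ),
    (A.det = 1 ∨ A.det = -1) ∧
    ∀ p ∈ P, ∀ i, ((A.map (fun z : ℤ => (z : ℝ))).mulVec p + fun j => (v j : ℝ)) i ∈
      Set.Icc (0 : ℝ) (l : ℝ)

/-- The set of lattice widths of `P` in all primitive directions `a ∈ ℤ²`. -/
def widthSet2 (P : Set (Fin 2 → ℝ)) : Set ℝ :=
  {w | ∃ a : Fin 2 → ℤ, Int.gcd (a 0) (a 1) = 1 ∧ width2 P a = w}

/-- `T(P) ⊆ [0,a] × [0,b]` for some affine unimodular transformation `T : p ↦ A·p + v`. -/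
def FitsInRect (P : Set (Fin 2 → ℝ)) (a b : ℤ) : Prop :=
  ∃ (A : Matrix (Fin 2) (Fin 2) ℤ) (v : Fin 2 → ℤ),
    (A.det = 1 ∨ A.det = -1) ∧
    ∀ p ∈ P, ((A.map (fun z : ℤ => (z : ℝ))).mulVec p + fun j => (v j : ℝ)) 0 ∈
        Set.Icc (0 : ℝ) (a : ℝ) ∧
      ((A.map (fun z : ℤ => (z : ℝ))).mulVec p + fun j => (v j : ℝ)) 1 ∈
        Set.Icc (0 : ℝ) (b : ℝ)

/-!
The width `a ↦ Δ_P(a)` is a seminorm on directions: `Δ_P(c a) = |c| Δ_P(a)` and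
`Δ_P(a + b) ≤ Δ_P(a) + Δ_P(b)`, since it is the diameter of the image of `P` under `p ↦ a·p`.
Let `d = (1, ±1)` be the diagonal whose sign pattern matches that of `(a, b)`, so `Δ_P(d) ≥ l`.
If `|a| ≤ |b|`, write `±b·d = (a, b) + (±b − a)·(1, 0)`, where `|±b − a| = |b| − |a|`; then
`|b| l ≤ Δ_P(a, b) + (|b| − |a|) l`. The case `|b| ≤ |a|` is the same with `(0, 1)`.
-/

def latticeForm (a : Fin 2 → ℤ) (p : Fin 2 → ℝ) : ℝ := ∑ i, (a i : ℝ) * p i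

lemma continuous_latticeForm (a : Fin 2 → ℤ) : Continuous (latticeForm a) := by
  unfold latticeForm
  fun_prop

lemma latticeForm_add (a b : Fin 2 → ℤ) (p : Fin 2 → ℝ) :
    latticeForm (a + b) p = latticeForm a p + latticeForm b p := by
  simp only [latticeForm, Pi.add_apply, Int.cast_add, add_mul, Finset.sum_add_distrib]

lemma latticeForm_smul (c : ℤ) (a : Fin 2 → ℤ) (p : Fin 2 → ℝ) :
    latticeForm (c • a) p = c * latticeForm a p := by
  simp only [latticeForm, Pi.smul_apply, smul_eq_mul, Int.cast_mul, Finset.mul_sum, mul_assoc]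

lemma isCompact_latticePoly2 (V : Finset (Fin 2 → ℤ)) : IsCompact (latticePoly2 V) :=
  (V.finite_toSet.image _).isCompact_convexHull (𝕜 := ℝ)

section Width

open scoped Pointwise

variable {P : Set (Fin 2 → ℝ)}

lemma isBounded_image_latticeForm (hP : IsCompact P) (a : Fin 2 → ℤ) :
    Bornology.IsBounded (latticeForm a '' P) :=
  (hP.image (continuous_latticeForm a)).isBounded

lemma width2_eq_diam (hP : IsCompact P) (a : Fin 2 → ℤ) :
    width2 P a = Metric.diam (latticeForm a '' P) :=
  (Real.diam_eq (isBounded_image_latticeForm hP a)).symm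

lemma width2_smul (hP : IsCompact P) (c : ℤ) (a : Fin 2 → ℤ) :
    width2 P (c • a) = |(c : ℝ)| * width2 P a := by
  have himage : latticeForm (c • a) '' P = (c : ℝ) • (latticeForm a '' P) := by
    rw [← Set.image_smul, Set.image_image]
    simp only [latticeForm_smul, smul_eq_mul]
  rw [width2_eq_diam hP, width2_eq_diam hP, himage, diam_smul₀, Real.norm_eq_abs]

lemma width2_add_le (hP : IsCompact P) (a b : Fin 2 → ℤ) :
    width2 P (a + b) ≤ width2 P a + width2 P b := by
  rw [width2_eq_diam hP, width2_eq_diam hP, width2_eq_diam hP]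
  refine Metric.diam_le_of_forall_dist_le (by positivity) ?_
  rintro _ ⟨p, hp, rfl⟩ _ ⟨q, hq, rfl⟩
  have hpq : dist (latticeForm (a + b) p) (latticeForm (a + b) q) ≤
      dist (latticeForm a p) (latticeForm a q) + dist (latticeForm b p) (latticeForm b q) := by
    simp only [Real.dist_eq, latticeForm_add]
    exact (abs_add_le _ _).trans_eq' (by ring_nf)
  exact hpq.trans (add_le_add
    (Metric.dist_le_diam_of_mem (isBounded_image_latticeForm hP a) ⟨p, hp, rfl⟩ ⟨q, hq, rfl⟩)
    (Metric.dist_le_diam_of_mem (isBounded_image_latticeForm hP b) ⟨p, hp, rfl⟩ ⟨q, hq, rfl⟩))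

lemma sub_mul_le_width2 (hP : IsCompact P) {l : ℝ} {c k : ℤ} {d e u : Fin 2 → ℤ}
    (hd : l ≤ width2 P d) (he : width2 P e ≤ l) (h : c • d = u + k • e) :
    (|c| - |k| : ℤ) * l ≤ width2 P u := by
  have hsplit : |(c : ℝ)| * width2 P d ≤ width2 P u + |(k : ℝ)| * width2 P e := by
    rw [← width2_smul hP, ← width2_smul hP, h]
    exact width2_add_le hP u (k • e)
  push_cast
  nlinarith [abs_nonneg (c : ℝ), abs_nonneg (k : ℝ)]

lemma mul_min_abs_le_width2 (hP : IsCompact P) {l : ℝ} (hx : width2 P ![1, 0] ≤ l)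
    (hy : width2 P ![0, 1] ≤ l) {σ : ℤ} (hσ : σ = 1 ∨ σ = -1) (hdiag : l ≤ width2 P ![1, σ])
    {a b : ℤ} (hsign : 0 < a ↔ 0 < σ * b) :
    (min |a| |b| : ℤ) * l ≤ width2 P ![a, b] := by
  rcases le_total |a| |b| with hab | hab
  · have hσσ : σ * σ = 1 := by rcases hσ with rfl | rfl <;> rfl
    have hmin : min |a| |b| = |σ * b| - |σ * b - a| := by
      simp only [abs_eq_max_neg] at *
      rcases hσ with rfl | rfl <;> omega
    rw [hmin]
    refine sub_mul_le_width2 hP hdiag hx ?_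
    ext i; fin_cases i <;> simp [mul_comm σ, mul_assoc, hσσ]
  · have hmin : min |a| |b| = |a| - |σ * a - b| := by
      simp only [abs_eq_max_neg] at *
      rcases hσ with rfl | rfl <;> omega
    rw [hmin]
    refine sub_mul_le_width2 hP hdiag hy ?_
    ext i; fin_cases i <;> simp [mul_comm]

end Width

theorem width_ge_mul_min_of_diag_ge_general (V : Finset (Fin 2 → ℤ))
    (P : Set (Fin 2 → ℝ)) (hP : P = latticePoly2 V) (l : ℤ)
    (he : max (width2 P ![1, 0]) (width2 P ![0, 1]) = (l : ℝ))
    (h1 : (l : ℝ) ≤ width2 P ![1, 1]) (h2 : (l : ℝ) ≤ width2 P ![1, -1]) :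
    ∀ a b : ℤ, a ≠ 0 → b ≠ 0 → ((l * min |a| |b| : ℤ) : ℝ) ≤ width2 P ![a, b] := by
  intro a b ha hb
  have hPc : IsCompact P := hP ▸ isCompact_latticePoly2 V
  have hx : width2 P ![1, 0] ≤ l := he ▸ le_max_left _ _
  have hy : width2 P ![0, 1] ≤ l := he ▸ le_max_right _ _
  rw [Int.cast_mul, mul_comm]
  by_cases hsign : 0 < a ↔ 0 < b
  · exact mul_min_abs_le_width2 hPc hx hy (.inl rfl) h1 (by rwa [one_mul])
  · exact mul_min_abs_le_width2 hPc hx hy (.inr rfl) h2 (by omega)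

/-- If `e_□(P) = l` and `Δ_P(x+y) ≥ l`, `Δ_P(x−y) ≥ l`, then for all nonzero integers
`a, b` we have `Δ_P(ax+by) ≥ l·min(|a|,|b|)`. -/
theorem width_ge_mul_min_of_diag_ge (V : Finset (Fin 2 → ℤ)) (hV : V.Nonempty)
    (P : Set (Fin 2 → ℝ)) (hP : P = latticePoly2 V) (l : ℤ)
    (he : max (width2 P ![1, 0]) (width2 P ![0, 1]) = (l : ℝ))
    (h1 : (l : ℝ) ≤ width2 P ![1, 1]) (h2 : (l : ℝ) ≤ width2 P ![1, -1]) :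
    ∀ a b : ℤ, a ≠ 0 → b ≠ 0 → ((l * min |a| |b| : ℤ) : ℝ) ≤ width2 P ![a, b] :=
  width_ge_mul_min_of_diag_ge_general V P hP l he h1 h2
end

section
/- Let P ⊂ ℝ² be a lattice polygon. Then: (1) there exists an affine unimodular transformation T of ℝ² such that T(P) ⊆ [0, w(P)] × [0, ls_□(P)]; and (2) for any integers a ≤ b such that T(P) ⊆ [0,a] × [0,b] for some affine unimodular transformation T, one has w(P) ≤ a and ls_□(P) ≤ b. -/
open Matrix Set

section LatticeWidth

variable {ι : Type*} [Fintype ι] (V : Finset (ι → ℤ)) (hV : V.Nonempty)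

def latticeWidth (a : ι → ℤ) : ℤ := V.sup' hV (a ⬝ᵥ ·) - V.inf' hV (a ⬝ᵥ ·)

variable {V}

lemma dotProduct_sub_le_latticeWidth (a : ι → ℤ) {v v' : ι → ℤ} (hv : v ∈ V) (hv' : v' ∈ V) :
    a ⬝ᵥ v - a ⬝ᵥ v' ≤ latticeWidth V hV a :=
  sub_le_sub (V.le_sup' (a ⬝ᵥ ·) hv) (V.inf'_le (a ⬝ᵥ ·) hv')

lemma latticeWidth_le_iff {a : ι → ℤ} {M : ℤ} :
    latticeWidth V hV a ≤ M ↔ ∀ v ∈ V, ∀ v' ∈ V, a ⬝ᵥ v - a ⬝ᵥ v' ≤ M := by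
  refine ⟨fun h v hv v' hv' => (dotProduct_sub_le_latticeWidth hV a hv hv').trans h, fun h => ?_⟩
  obtain ⟨v, hv, hmax⟩ := V.exists_mem_eq_sup' hV (a ⬝ᵥ ·)
  obtain ⟨v', hv', hmin⟩ := V.exists_mem_eq_inf' hV (a ⬝ᵥ ·)
  rw [latticeWidth, hmax, hmin]
  exact h v hv v' hv'

lemma latticeWidth_nonneg (a : ι → ℤ) : 0 ≤ latticeWidth V hV a := by
  obtain ⟨v, hv⟩ := hV
  simpa using dotProduct_sub_le_latticeWidth ⟨v, hv⟩ a hv hv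

lemma latticeWidth_neg (a : ι → ℤ) : latticeWidth V hV (-a) = latticeWidth V hV a := by
  have key : ∀ a : ι → ℤ, latticeWidth V hV (-a) ≤ latticeWidth V hV a := fun a =>
    (latticeWidth_le_iff hV).2 fun v hv v' hv' => by
      have := dotProduct_sub_le_latticeWidth hV a hv' hv
      simp only [neg_dotProduct]
      linarith
  exact le_antisymm (key a) (by simpa using key (-a))

lemma latticeWidth_sub_smul_le (g a : ι → ℤ) {r : ℤ} (hr : 0 ≤ r) :
    latticeWidth V hV (g - r • a) ≤ latticeWidth V hV g + r * latticeWidth V hV a :=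
  (latticeWidth_le_iff hV).2 fun v hv v' hv' => by
    have hg := dotProduct_sub_le_latticeWidth hV g hv hv'
    have ha := mul_le_mul_of_nonneg_left (dotProduct_sub_le_latticeWidth hV a hv' hv) hr
    simp only [sub_dotProduct, smul_dotProduct, smul_eq_mul] at *
    linarith

lemma latticeWidth_le_of_smul_le {b : ι → ℤ} {d M : ℤ} (hd : 0 < d)
    (h : latticeWidth V hV (d • b) ≤ d * M) : latticeWidth V hV b ≤ M :=
  (latticeWidth_le_iff hV).2 fun v hv v' hv' => by
    have := (dotProduct_sub_le_latticeWidth hV (d • b) hv hv').trans h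
    simp only [smul_dotProduct, smul_eq_mul, ← mul_sub] at this
    exact le_of_mul_le_mul_left this hd

lemma exists_add_mem_Icc_iff (a : ι → ℤ) (m : ℤ) :
    (∃ t : ℤ, ∀ v ∈ V, a ⬝ᵥ v + t ∈ Icc 0 m) ↔ latticeWidth V hV a ≤ m := by
  constructor
  · rintro ⟨t, ht⟩
    refine (latticeWidth_le_iff hV).2 fun v hv v' hv' => ?_
    have := (ht v hv).2
    have := (ht v' hv').1
    linarith
  · intro h
    refine ⟨-V.inf' hV (a ⬝ᵥ ·), fun v hv => ⟨?_, ?_⟩⟩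
    · linarith [V.inf'_le (a ⬝ᵥ ·) hv]
    · have := V.le_sup' (a ⬝ᵥ ·) hv
      rw [latticeWidth] at h
      linarith

end LatticeWidth

section LatticePolygon

variable {V : Finset (Fin 2 → ℤ)}

lemma intCast_dotProduct_intCast (a v : Fin 2 → ℤ) :
    (fun i => (a i : ℝ)) ⬝ᵥ (fun i => (v i : ℝ)) = ((a ⬝ᵥ v : ℤ) : ℝ) := by
  push_cast [dotProduct]
  rfl

lemma dotProduct_mem_Icc_of_mem_latticePoly2 {c : Fin 2 → ℝ} {lo hi : ℝ}
    (h : ∀ v ∈ V, c ⬝ᵥ (fun i => (v i : ℝ)) ∈ Icc lo hi) {p : Fin 2 → ℝ}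
    (hp : p ∈ latticePoly2 V) : c ⬝ᵥ p ∈ Icc lo hi :=
  convexHull_min (by rintro _ ⟨v, hv, rfl⟩; exact h v hv)
    ((convex_Icc lo hi).is_linear_preimage ⟨dotProduct_add c, fun r p => dotProduct_smul r c p⟩) hp

lemma forall_mem_latticePoly2_add_mem_Icc_iff (a : Fin 2 → ℤ) (t m : ℤ) :
    (∀ p ∈ latticePoly2 V, (fun i => (a i : ℝ)) ⬝ᵥ p + t ∈ Icc (0 : ℝ) m) ↔
      ∀ v ∈ V, a ⬝ᵥ v + t ∈ Icc 0 m := by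
  constructor
  · intro h v hv
    have := h _ (subset_convexHull ℝ _ ⟨v, hv, rfl⟩)
    rw [intCast_dotProduct_intCast, mem_Icc] at this
    exact mem_Icc.2 (by exact_mod_cast this)
  · intro h p hp
    have := dotProduct_mem_Icc_of_mem_latticePoly2 (lo := -t) (hi := m - t) (fun v hv => by
      rw [intCast_dotProduct_intCast]
      have : (0 : ℝ) ≤ a ⬝ᵥ v + t ∧ (a ⬝ᵥ v + t : ℝ) ≤ m := by exact_mod_cast h v hv
      constructor <;> linarith [this.1, this.2]) hp
    constructor <;> linarith [this.1, this.2]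

variable (hV : V.Nonempty)

theorem width2_latticePoly2 (a : Fin 2 → ℤ) :
    width2 (latticePoly2 V) a = latticeWidth V hV a := by
  set f : (Fin 2 → ℝ) → ℝ := fun p => (fun i => (a i : ℝ)) ⬝ᵥ p
  have hbound : ∀ p ∈ latticePoly2 V,
      f p ∈ Icc ((V.inf' hV (a ⬝ᵥ ·) : ℤ) : ℝ) ((V.sup' hV (a ⬝ᵥ ·) : ℤ) : ℝ) :=
    fun p => dotProduct_mem_Icc_of_mem_latticePoly2 fun v hv => by
      rw [intCast_dotProduct_intCast]
      exact ⟨by exact_mod_cast V.inf'_le (a ⬝ᵥ ·) hv, by exact_mod_cast V.le_sup' (a ⬝ᵥ ·) hv⟩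
  obtain ⟨v, hv, hmax⟩ := V.exists_mem_eq_sup' hV (a ⬝ᵥ ·)
  obtain ⟨v', hv', hmin⟩ := V.exists_mem_eq_inf' hV (a ⬝ᵥ ·)
  have hgreatest : IsGreatest (f '' latticePoly2 V) ((V.sup' hV (a ⬝ᵥ ·) : ℤ) : ℝ) :=
    ⟨⟨_, subset_convexHull ℝ _ ⟨v, hv, rfl⟩, by simp only [f, intCast_dotProduct_intCast, hmax]⟩,
      forall_mem_image.2 fun p hp => (hbound p hp).2⟩
  have hleast : IsLeast (f '' latticePoly2 V) ((V.inf' hV (a ⬝ᵥ ·) : ℤ) : ℝ) :=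
    ⟨⟨_, subset_convexHull ℝ _ ⟨v', hv', rfl⟩, by simp only [f, intCast_dotProduct_intCast, hmin]⟩,
      forall_mem_image.2 fun p hp => (hbound p hp).1⟩
  rw [width2, latticeWidth]
  push_cast
  exact congr_arg₂ _ hgreatest.csSup_eq hleast.csInf_eq

theorem fitsInRect_latticePoly2_iff (m n : ℤ) :
    FitsInRect (latticePoly2 V) m n ↔ ∃ A : Matrix (Fin 2) (Fin 2) ℤ, (A.det = 1 ∨ A.det = -1) ∧
      latticeWidth V hV (A 0) ≤ m ∧ latticeWidth V hV (A 1) ≤ n := by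
  simp only [← exists_add_mem_Icc_iff hV, ← forall_mem_latticePoly2_add_mem_Icc_iff]
  constructor
  · rintro ⟨A, t, hA, h⟩
    exact ⟨A, hA, ⟨t 0, fun p hp => (h p hp).1⟩, ⟨t 1, fun p hp => (h p hp).2⟩⟩
  · rintro ⟨A, hA, ⟨t₀, h₀⟩, ⟨t₁, h₁⟩⟩
    exact ⟨A, ![t₀, t₁], hA, fun p hp => ⟨h₀ p hp, h₁ p hp⟩⟩

end LatticePolygon

lemma fitsInSquare_iff_fitsInRect {P : Set (Fin 2 → ℝ)} {l : ℤ} :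
    FitsInSquare P l ↔ FitsInRect P l l := by
  simp only [FitsInSquare, FitsInRect, Fin.forall_fin_two]

lemma FitsInRect.mono {P : Set (Fin 2 → ℝ)} {a b a' b' : ℤ} (h : FitsInRect P a b)
    (ha : a ≤ a') (hb : b ≤ b') : FitsInRect P a' b' := by
  obtain ⟨A, t, hA, h⟩ := h
  have ha : (a : ℝ) ≤ a' := by exact_mod_cast ha
  have hb : (b : ℝ) ≤ b' := by exact_mod_cast hb
  exact ⟨A, t, hA, fun p hp =>
    ⟨Icc_subset_Icc_right ha (h p hp).1, Icc_subset_Icc_right hb (h p hp).2⟩⟩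

lemma isCoprime_row_of_det {A : Matrix (Fin 2) (Fin 2) ℤ} (hA : A.det = 1 ∨ A.det = -1)
    (i : Fin 2) : IsCoprime (A i 0) (A i 1) := by
  rw [det_fin_two] at hA
  revert i
  rw [Fin.forall_fin_two]
  rcases hA with h | h <;> refine ⟨?_, ?_⟩
  · exact ⟨A 1 1, -A 1 0, by linear_combination h⟩
  · exact ⟨-A 0 1, A 0 0, by linear_combination h⟩
  · exact ⟨-A 1 1, A 1 0, by linear_combination -h⟩
  · exact ⟨A 0 1, -A 0 0, by linear_combination -h⟩

lemma exists_cross_eq_one {a : Fin 2 → ℤ} (ha : IsCoprime (a 0) (a 1)) :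
    ∃ b : Fin 2 → ℤ, a 0 * b 1 - a 1 * b 0 = 1 := by
  obtain ⟨u, v, huv⟩ := ha
  exact ⟨![-v, u], by simp only [cons_val_zero, cons_val_one]; linear_combination huv⟩

lemma exists_row_cross_ne_zero {A : Matrix (Fin 2) (Fin 2) ℤ} (hA : A.det ≠ 0)
    {a : Fin 2 → ℤ} (ha : a ≠ 0) : ∃ i, a 0 * A i 1 - a 1 * A i 0 ≠ 0 := by
  by_contra! h
  rw [det_fin_two] at hA
  refine ha (funext fun j => ?_)
  fin_cases j
  · have : a 0 * (A 0 0 * A 1 1 - A 0 1 * A 1 0) = 0 := by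
      linear_combination A 0 0 * h 1 - A 1 0 * h 0
    exact (mul_eq_zero.1 this).resolve_right hA
  · have : a 1 * (A 0 0 * A 1 1 - A 0 1 * A 1 0) = 0 := by
      linear_combination A 0 1 * h 1 - A 1 1 * h 0
    exact (mul_eq_zero.1 this).resolve_right hA

theorem exists_cross_eq_one_latticeWidth_le {V : Finset (Fin 2 → ℤ)} (hV : V.Nonempty)
    {a g : Fin 2 → ℤ} {M : ℤ} (ha : IsCoprime (a 0) (a 1)) (hag : a 0 * g 1 - a 1 * g 0 ≠ 0)
    (haM : latticeWidth V hV a ≤ M) (hgM : latticeWidth V hV g ≤ M) :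
    ∃ b : Fin 2 → ℤ, a 0 * b 1 - a 1 * b 0 = 1 ∧ latticeWidth V hV b ≤ M := by
  wlog hd : 0 < a 0 * g 1 - a 1 * g 0 generalizing g
  · refine this (g := -g) ?_ (by rwa [latticeWidth_neg]) ?_ <;>
      simp only [Pi.neg_apply, mul_neg] <;> omega
  obtain ⟨b₀, hb₀⟩ := exists_cross_eq_one ha
  set d := a 0 * g 1 - a 1 * g 0
  set x := g 0 * b₀ 1 - g 1 * b₀ 0
  have hdb : d • ((x / d) • a + b₀) = g - (x % d) • a := by
    have hx := Int.emod_add_mul_ediv x d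
    funext i
    simp only [Pi.smul_apply, Pi.add_apply, Pi.sub_apply, smul_eq_mul]
    revert i
    rw [Fin.forall_fin_two]
    exact ⟨by linear_combination a 0 * hx + g 0 * hb₀, by linear_combination a 1 * hx + g 1 * hb₀⟩
  refine ⟨(x / d) • a + b₀, ?_, latticeWidth_le_of_smul_le hV hd ?_⟩
  · simp only [Pi.add_apply, Pi.smul_apply, smul_eq_mul]
    linear_combination hb₀
  have hr := Int.emod_lt_of_pos x hd
  have hr₀ := Int.emod_nonneg x hd.ne'
  calc latticeWidth V hV (d • ((x / d) • a + b₀))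
      ≤ latticeWidth V hV g + x % d * latticeWidth V hV a := by
        rw [hdb]; exact latticeWidth_sub_smul_le hV g a hr₀
    _ ≤ M + (d - 1) * M := by
        have := latticeWidth_nonneg hV a
        gcongr <;> omega
    _ = d * M := by ring

/-- The set of pairs `(a,b)` such that some affine unimodular image of `P` lies in
`[0,a] × [0,b]` has a minimum (w.r.t. the product order) at `(w(P), ls_□(P))`:
(1) `P` fits unimodularly in `[0, w(P)] × [0, ls_□(P)]`, and (2) whenever `P` fits
unimodularly in `[0,a] × [0,b]` with `a ≤ b`, we have `w(P) ≤ a` and `ls_□(P) ≤ b`. -/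
theorem fitsInRect_min (V : Finset (Fin 2 → ℤ)) (hV : V.Nonempty)
    (P : Set (Fin 2 → ℝ)) (hP : P = latticePoly2 V) (w l : ℤ)
    (hw : IsLeast (widthSet2 P) (w : ℝ))
    (hl : IsLeast {l' : ℤ | FitsInSquare P l'} l) :
    FitsInRect P w l ∧ ∀ a b : ℤ, a ≤ b → FitsInRect P a b → w ≤ a ∧ l ≤ b := by
  subst hP
  have hw_le : ∀ A : Matrix (Fin 2) (Fin 2) ℤ, (A.det = 1 ∨ A.det = -1) →
      w ≤ latticeWidth V hV (A 0) := fun A hA => by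
    have := hw.2 ⟨A 0, Int.isCoprime_iff_gcd_eq_one.1 (isCoprime_row_of_det hA 0), rfl⟩
    rwa [width2_latticePoly2 hV, Int.cast_le] at this
  obtain ⟨a, ha, haw⟩ := hw.1
  rw [width2_latticePoly2 hV, Int.cast_inj] at haw
  replace ha := Int.isCoprime_iff_gcd_eq_one.2 ha
  obtain ⟨A, hA, hA₀, hA₁⟩ :=
    (fitsInRect_latticePoly2_iff hV l l).1 (fitsInSquare_iff_fitsInRect.1 hl.1)
  have hA_rows : ∀ i, latticeWidth V hV (A i) ≤ l := Fin.forall_fin_two.2 ⟨hA₀, hA₁⟩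
  obtain ⟨i, hi⟩ := exists_row_cross_ne_zero (A := A) (by rcases hA with h | h <;> simp [h])
    (a := a) (by rintro rfl; exact not_isCoprime_zero_zero ha)
  obtain ⟨b, hab, hb⟩ := exists_cross_eq_one_latticeWidth_le hV ha hi
    (haw ▸ (hw_le A hA).trans hA₀) (hA_rows i)
  refine ⟨(fitsInRect_latticePoly2_iff hV w l).2 ⟨Matrix.of ![a, b], ?_, haw.le, hb⟩,
    fun m n hmn hfit => ?_⟩
  · simpa [det_fin_two] using Or.inl hab
  obtain ⟨B, hB, hB₀, -⟩ := (fitsInRect_latticePoly2_iff hV m n).1 hfit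
  exact ⟨(hw_le B hB).trans hB₀, hl.2 (fitsInSquare_iff_fitsInRect.2 (hfit.mono hmn le_rfl))⟩
end

section
/- Let P ⊂ ℝ³ be a lattice polytope with Δ_P(x) = l₁ ≤ Δ_P(y) = l₂ ≤ Δ_P(z) = l. Suppose Δ_P(x+y) ≥ l₂ and Δ_P(x−y) ≥ l₂, and suppose Δ_P(ax + by + z) ≥ l for all integers a, b. Then the lattice width of P satisfies w(P) = min(l₁, m), where m is the minimum of w_{(a,b,c)}(P) over all (a,b,c) ∈ ℤ³ with |a| = |b| = 1 and |c| = 2. -/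
/-- The lattice polytope determined by a nonempty finite set `V` of lattice points:
the convex hull in `ℝ³` of the corresponding real points. -/
def latticePoly3 (V : Finset (Fin 3 → ℤ)) : Set (Fin 3 → ℝ) :=
  convexHull ℝ ((fun v : Fin 3 → ℤ => fun i => (v i : ℝ)) '' (V : Set (Fin 3 → ℤ)))

/-- `Δ_P(a₀·x + a₁·y + a₂·z) = w_a(P)`, the lattice width of `P ⊆ ℝ³` in direction
`a ∈ ℤ³`: the sup minus the inf of the linear form `p ↦ a·p` over `P`. -/
noncomputable def width3 (P : Set (Fin 3 → ℝ)) (a : Fin 3 → ℤ) : ℝ :=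
  sSup ((fun p => ∑ i, (a i : ℝ) * p i) '' P) - sInf ((fun p => ∑ i, (a i : ℝ) * p i) '' P)

/-- `T(P) ⊆ [0,l]³` for some affine unimodular transformation `T : p ↦ A·p + v`. -/
def FitsInCube3 (P : Set (Fin 3 → ℝ)) (l : ℤ) : Prop :=
  ∃ (A : Matrix (Fin 3) (Fin 3) ℤ) (v : Fin 3 → ℤ),
    (A.det = 1 ∨ A.det = -1) ∧
    ∀ p ∈ P, ∀ i, ((A.map (fun z : ℤ => (z : ℝ))).mulVec p + fun j => (v j : ℝ)) i ∈
      Set.Icc (0 : ℝ) (l : ℝ)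

/-- The set of lattice widths of `P` in all primitive directions `a ∈ ℤ³`. -/
def widthSet3 (P : Set (Fin 3 → ℝ)) : Set ℝ :=
  {w | ∃ a : Fin 3 → ℤ, Int.gcd (a 0) (Int.gcd (a 1) (a 2)) = 1 ∧ width3 P a = w}

/-- Membership in the set `S` of Definition 3.5 (for parameters `l₁ ≤ l₂ ≤ l`):
`(a,b) ∈ S` iff (1) `|a| ≥ |b|` implies `|b| ≤ (2l−1)/l₂` and `|a| ≤ (2l−1+|b|·l₂)/l₁`,
and (2) `|b| ≥ |a|` implies `|a| ≤ (2l−1)/l₁` and `|b| ≤ (2l−1+|a|·l₁)/l₂`. -/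
def MemS (l₁ l₂ l a b : ℤ) : Prop :=
  (|b| ≤ |a| → ((|b| : ℝ) ≤ (2 * (l : ℝ) - 1) / (l₂ : ℝ) ∧
    (|a| : ℝ) ≤ (2 * (l : ℝ) - 1 + (|b| : ℝ) * (l₂ : ℝ)) / (l₁ : ℝ))) ∧
  (|a| ≤ |b| → ((|a| : ℝ) ≤ (2 * (l : ℝ) - 1) / (l₁ : ℝ) ∧
    (|b| : ℝ) ≤ (2 * (l : ℝ) - 1 + (|a| : ℝ) * (l₁ : ℝ)) / (l₂ : ℝ)))

/-! The width `d ↦ w_d(P)` of a lattice polytope is a seminorm on `ℤ³`, so for `k ≥ 0`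
`k · w(g) ≤ w(f) + Σᵢ |k gᵢ - fᵢ| · w(eᵢ)`. Each primitive `f = (a, b, c)` with `c ≥ 0` is bounded
below by such an inequality for a suitable `g`: the diagonal `(sign a, sign b, 0)` when `c = 0`, and
`(α, β, 1)` with `cα, cβ` nearest to `a, b` when `c ≥ 1`. The latter fails only for `c = 2` with
`a, b` odd, where `(0, sign b, 1)`, `(sign a, 0, 1)` or the diagonal (bounded below by halving
`(a, b, 2) - (sign a, sign b, 0)`) take over, except at the corners `|a| = |b| = 1`. -/

section Support

variable {n : ℕ} (V : Finset (Fin n → ℤ)) (hV : V.Nonempty)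

def supportFun (d : Fin n → ℤ) : ℤ := V.sup' hV (d ⬝ᵥ ·)

lemma supportFun_add_le (d e : Fin n → ℤ) :
    supportFun V hV (d + e) ≤ supportFun V hV d + supportFun V hV e :=
  Finset.sup'_le _ _ fun v hv => by
    rw [add_dotProduct]
    exact add_le_add (Finset.le_sup' (d ⬝ᵥ ·) hv) (Finset.le_sup' (e ⬝ᵥ ·) hv)

lemma supportFun_smul {k : ℤ} (hk : 0 ≤ k) (d : Fin n → ℤ) :
    supportFun V hV (k • d) = k * supportFun V hV d := by
  simp only [supportFun, smul_dotProduct, smul_eq_mul]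
  exact (Finset.apply_sup'_eq_sup'_comp hV _ fun x y => mul_max_of_nonneg x y hk).symm

lemma supportFun_add_supportFun_neg_smul (k : ℤ) (d : Fin n → ℤ) :
    supportFun V hV (k • d) + supportFun V hV (-(k • d)) =
      |k| * (supportFun V hV d + supportFun V hV (-d)) := by
  rcases le_or_gt 0 k with hk | hk
  · rw [← smul_neg, supportFun_smul V hV hk, supportFun_smul V hV hk, abs_of_nonneg hk, mul_add]
  · rw [← neg_smul, ← neg_smul_neg k d, supportFun_smul V hV (neg_nonneg.2 hk.le),
      supportFun_smul V hV (neg_nonneg.2 hk.le), abs_of_neg hk, mul_add, add_comm]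

noncomputable def widthSeminorm : Seminorm ℤ (Fin n → ℤ) :=
  Seminorm.of (fun d => (supportFun V hV d + supportFun V hV (-d) : ℤ))
    (fun d e => by
      have h₁ := supportFun_add_le V hV d e
      have h₂ := supportFun_add_le V hV (-d) (-e)
      rw [← neg_add] at h₂
      exact_mod_cast (by omega))
    (fun k d => by
      rw [supportFun_add_supportFun_neg_smul, Int.norm_eq_abs]
      push_cast; rfl)

lemma widthSeminorm_apply (d : Fin n → ℤ) :
    widthSeminorm V hV d = (supportFun V hV d + supportFun V hV (-d) : ℤ) := rfl

end Support

section LatticePolytope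

variable (V : Finset (Fin 3 → ℤ)) (hV : V.Nonempty)

lemma isGreatest_linearForm_latticePoly3 (d : Fin 3 → ℤ) :
    IsGreatest ((fun p => ∑ i, (d i : ℝ) * p i) '' latticePoly3 V) (supportFun V hV d) := by
  have hform : ∀ w : Fin 3 → ℤ, ∑ i, (d i : ℝ) * (w i : ℝ) = (d ⬝ᵥ w : ℤ) := by
    simp [dotProduct]
  obtain ⟨v, hv, hvd⟩ := Finset.exists_mem_eq_sup' hV (d ⬝ᵥ ·)
  refine ⟨⟨_, subset_convexHull ℝ _ ⟨v, hv, rfl⟩, by simp [hform, supportFun, hvd]⟩, ?_⟩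
  rintro _ ⟨p, hp, rfl⟩
  obtain ⟨_, ⟨w, hw, rfl⟩, hpw⟩ :=
    ((dotProductBilin ℝ ℝ fun i => (d i : ℝ)).convexOn convex_univ).exists_ge_of_mem_convexHull
      (Set.subset_univ _) hp
  refine hpw.trans ?_
  simp only [dotProductBilin_apply_apply, dotProduct, hform]
  exact_mod_cast Finset.le_sup' (d ⬝ᵥ ·) hw

lemma isLeast_linearForm_latticePoly3 (d : Fin 3 → ℤ) :
    IsLeast ((fun p => ∑ i, (d i : ℝ) * p i) '' latticePoly3 V) (-supportFun V hV (-d)) := by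
  obtain ⟨⟨p, hp, hpd⟩, hub⟩ := isGreatest_linearForm_latticePoly3 V hV (-d)
  have hneg : ∀ q : Fin 3 → ℝ, ∑ i, ((-d) i : ℝ) * q i = -∑ i, (d i : ℝ) * q i := by
    simp [Finset.sum_neg_distrib]
  refine ⟨⟨p, hp, by simp only [← hpd, hneg, neg_neg]⟩, ?_⟩
  rintro _ ⟨q, hq, rfl⟩
  have := hub ⟨q, hq, rfl⟩
  simp only [hneg] at this
  push_cast
  linarith

lemma width3_latticePoly3 (d : Fin 3 → ℤ) :
    width3 (latticePoly3 V) d = widthSeminorm V hV d := by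
  rw [width3, (isGreatest_linearForm_latticePoly3 V hV d).csSup_eq,
    (isLeast_linearForm_latticePoly3 V hV d).csInf_eq, widthSeminorm_apply]
  push_cast
  ring

end LatticePolytope

lemma Seminorm.abs_mul_le_add_sub {E : Type*} [AddCommGroup E] (N : Seminorm ℤ E) (k : ℤ)
    (g f : E) : |(k : ℝ)| * N g ≤ N f + N (k • g - f) := by
  rw [← Int.norm_eq_abs, ← map_smul_eq_mul]
  simpa using map_add_le_add N f (k • g - f)

lemma Seminorm.le_apply_smul {E : Type*} [AddCommGroup E] (N : Seminorm ℤ E) {k : ℤ} (hk : k ≠ 0)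
    (v : E) : N v ≤ N (k • v) := by
  rw [map_smul_eq_mul, Int.norm_eq_abs]
  exact le_mul_of_one_le_left (apply_nonneg N v) (by exact_mod_cast Int.one_le_abs hk)

lemma abs_mul_sign_sub {a k : ℤ} (ha : a ≠ 0) (hk : |a| ≤ k) : |k * a.sign - a| = k - |a| := by
  rcases ha.lt_or_gt with h | h
  · rw [abs_of_neg h] at hk ⊢
    rw [Int.sign_eq_neg_one_of_neg h, abs_of_nonpos (by linarith)]
    ring
  · rw [abs_of_pos h] at hk ⊢
    rw [Int.sign_eq_one_of_pos h, mul_one, abs_of_nonneg (by linarith)]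

lemma Seminorm.apply_vec3_le (N : Seminorm ℤ (Fin 3 → ℤ)) (p q r : ℤ) :
    N ![p, q, r] ≤
      |(p : ℝ)| * N ![1, 0, 0] + |(q : ℝ)| * N ![0, 1, 0] + |(r : ℝ)| * N ![0, 0, 1] := by
  have hpqr : ![p, q, r] = p • ![1, 0, 0] + q • ![0, 1, 0] + r • ![0, 0, 1] := by
    ext i; fin_cases i <;> simp
  rw [hpqr]
  refine (map_add_le_add N _ _).trans ?_
  grw [map_add_le_add N]
  simp only [map_smul_eq_mul, Int.norm_eq_abs, le_refl]

lemma Seminorm.mul_apply_le_add_residuals (N : Seminorm ℤ (Fin 3 → ℤ)) {k : ℤ} (hk : 0 ≤ k)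
    (α β γ a b c : ℤ) :
    k * N ![α, β, γ] ≤ N ![a, b, c] + ((|k * α - a| : ℤ) : ℝ) * N ![1, 0, 0] +
      ((|k * β - b| : ℤ) : ℝ) * N ![0, 1, 0] + ((|k * γ - c| : ℤ) : ℝ) * N ![0, 0, 1] := by
  have h := N.abs_mul_le_add_sub k ![α, β, γ] ![a, b, c]
  have hres : k • ![α, β, γ] - ![a, b, c] = ![k * α - a, k * β - b, k * γ - c] := by
    ext i; fin_cases i <;> simp
  rw [hres, abs_of_nonneg (by exact_mod_cast hk : (0 : ℝ) ≤ k)] at h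
  simp only [Int.cast_abs]
  linarith [N.apply_vec3_le (k * α - a) (k * β - b) (k * γ - c)]

lemma exists_two_mul_sub_mem_Ioc (a : ℤ) {c : ℤ} (hc : 0 < c) :
    ∃ α, -c < 2 * (c * α - a) ∧ 2 * (c * α - a) ≤ c := by
  have h₁ := Int.mul_ediv_add_emod (2 * a + c) (2 * c)
  have h₂ := Int.emod_nonneg (2 * a + c) (by omega : 2 * c ≠ 0)
  have h₃ := Int.emod_lt_of_pos (2 * a + c) (by omega : 0 < 2 * c)
  exact ⟨(2 * a + c) / (2 * c), by linarith, by linarith⟩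

lemma exists_abs_add_abs_le {a b c : ℤ} (hc : 0 < c) (hg : Int.gcd a (Int.gcd b c) = 1)
    (hodd : ¬(c = 2 ∧ Odd a ∧ Odd b)) : ∃ α β, |c * α - a| + |c * β - b| ≤ c - 1 := by
  obtain ⟨α, hα₁, hα₂⟩ := exists_two_mul_sub_mem_Ioc a hc
  obtain ⟨β, hβ₁, hβ₂⟩ := exists_two_mul_sub_mem_Ioc b hc
  refine ⟨α, β, ?_⟩
  by_cases htie : 2 * (c * α - a) = c ∧ 2 * (c * β - b) = c
  · -- a tie in both coordinates makes `c * α - a` a common divisor of `a`, `b` and `c`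
    obtain ⟨h₁, h₂⟩ := htie
    have hq : c * β - b = c * α - a := by linarith
    have hj : c * α - a ∣ 1 := by
      rw [← Int.natCast_one, ← hg]
      exact Int.dvd_coe_gcd ⟨2 * α - 1, by linear_combination -α * h₁⟩
        (Int.dvd_coe_gcd ⟨2 * β - 1, by linear_combination -β * h₁ - hq⟩
          ⟨2, by linear_combination -h₁⟩)
    have hc2 : c = 2 := by linarith [Int.eq_one_of_dvd_one (by linarith) hj]
    subst hc2
    exact (hodd ⟨rfl, ⟨α - 1, by linarith⟩, ⟨β - 1, by linarith⟩⟩).elim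
  · generalize c * α - a = p at *
    generalize c * β - b = q at *
    rcases abs_cases p with ⟨hp, _⟩ | ⟨hp, _⟩ <;> rcases abs_cases q with ⟨hq, _⟩ | ⟨hq, _⟩ <;>
      omega

lemma Odd.exists_two_mul_sub_eq_neg_sign {x : ℤ} (hx : Odd x) : ∃ t, 2 * t - x = -x.sign := by
  obtain ⟨m, rfl⟩ := hx
  rcases (show 2 * m + 1 ≠ 0 by omega).lt_or_gt with h | h
  · exact ⟨m + 1, by rw [Int.sign_eq_neg_one_of_neg h]; ring⟩
  · exact ⟨m, by rw [Int.sign_eq_one_of_pos h]; ring⟩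

/-- The conditions `Δ(x) ≤ Δ(y) ≤ Δ(z)`, `Δ(x ± y) ≥ Δ(y)` and `Δ(ax + by + z) ≥ Δ(z)` on the
widths `Δ = N` of the coordinate forms. -/
structure IsReducedBasis (N : Seminorm ℤ (Fin 3 → ℤ)) : Prop where
  x_le_y : N ![1, 0, 0] ≤ N ![0, 1, 0]
  y_le_z : N ![0, 1, 0] ≤ N ![0, 0, 1]
  y_le_x_add_y : N ![0, 1, 0] ≤ N ![1, 1, 0]
  y_le_x_sub_y : N ![0, 1, 0] ≤ N ![1, -1, 0]
  z_le : ∀ a b : ℤ, N ![0, 0, 1] ≤ N ![a, b, 1]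

namespace IsReducedBasis

variable {N : Seminorm ℤ (Fin 3 → ℤ)}

lemma y_le_apply_of_abs_eq_one (hN : IsReducedBasis N) {s t : ℤ} (hs : |s| = 1) (ht : |t| = 1) :
    N ![0, 1, 0] ≤ N ![s, t, 0] := by
  rcases (abs_eq zero_le_one).1 hs with rfl | rfl <;>
    rcases (abs_eq zero_le_one).1 ht with rfl | rfl
  · exact hN.y_le_x_add_y
  · exact hN.y_le_x_sub_y
  · simpa [← map_neg_eq_map N ![-1, 1, 0]] using hN.y_le_x_sub_y
  · simpa [← map_neg_eq_map N ![-1, -1, 0]] using hN.y_le_x_add_y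

lemma max_mul_apply_sign_le (hN : IsReducedBasis N) {a b : ℤ} (ha : a ≠ 0) (hb : b ≠ 0)
    (c : ℤ) :
    ((max |a| |b| : ℤ) : ℝ) * N ![a.sign, b.sign, 0] ≤ N ![a, b, c] +
      ((2 * max |a| |b| - |a| - |b| : ℤ) : ℝ) * N ![0, 1, 0] + ((|c| : ℤ) : ℝ) * N ![0, 0, 1] := by
  have h := N.mul_apply_le_add_residuals (k := max |a| |b|) (by positivity) a.sign b.sign 0 a b c
  rw [abs_mul_sign_sub ha (le_max_left _ _), abs_mul_sign_sub hb (le_max_right _ _),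
    mul_zero, zero_sub, abs_neg] at h
  have hx : ((max |a| |b| - |a| : ℤ) : ℝ) * N ![1, 0, 0] ≤
      ((max |a| |b| - |a| : ℤ) : ℝ) * N ![0, 1, 0] :=
    mul_le_mul_of_nonneg_left hN.x_le_y (by simp)
  push_cast at h hx ⊢
  linarith

lemma x_le_apply_of_ne_zero (hN : IsReducedBasis N) {a b : ℤ} (hab : a ≠ 0 ∨ b ≠ 0) :
    N ![1, 0, 0] ≤ N ![a, b, 0] := by
  by_cases hb : b = 0
  · subst hb
    have hsmul : ![a, 0, 0] = a • ![1, 0, 0] := by ext i; fin_cases i <;> simp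
    exact hsmul ▸ N.le_apply_smul (by simpa using hab) _
  by_cases ha : a = 0
  · subst ha
    have hsmul : ![0, b, 0] = b • ![0, 1, 0] := by ext i; fin_cases i <;> simp
    exact hN.x_le_y.trans (hsmul ▸ N.le_apply_smul hb _)
  have h := hN.max_mul_apply_sign_le ha hb 0
  have hd := hN.y_le_apply_of_abs_eq_one (Int.abs_sign_of_ne_zero ha) (Int.abs_sign_of_ne_zero hb)
  have hk : 1 ≤ |a| + |b| - max |a| |b| := by
    have := Int.one_le_abs ha
    have := Int.one_le_abs hb
    omega
  have hk' : (1 : ℝ) ≤ |(a : ℝ)| + |(b : ℝ)| - max |(a : ℝ)| |(b : ℝ)| := by exact_mod_cast hk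
  have hmax : (0 : ℝ) ≤ max |(a : ℝ)| |(b : ℝ)| := by positivity
  push_cast [abs_zero, zero_mul, add_zero] at h
  nlinarith [hN.x_le_y, mul_le_mul_of_nonneg_left hd hmax,
    mul_le_mul_of_nonneg_right hk' (apply_nonneg N ![0, 1, 0])]

lemma y_le_apply_of_odd (hN : IsReducedBasis N) {a b : ℤ} (ha : Odd a) (hb : Odd b)
    (ha3 : 3 ≤ |a|) (hb3 : 3 ≤ |b|) : N ![0, 1, 0] ≤ N ![a, b, 2] := by
  have ha0 : a ≠ 0 := by rintro rfl; simp at ha3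
  have hb0 : b ≠ 0 := by rintro rfl; simp at hb3
  obtain ⟨t₁, ht₁⟩ := ha.exists_two_mul_sub_eq_neg_sign
  obtain ⟨t₂, ht₂⟩ := hb.exists_two_mul_sub_eq_neg_sign
  have hhalf := N.abs_mul_le_add_sub 2 ![t₁, t₂, 1] ![a, b, 2]
  have hv : (2 : ℤ) • ![t₁, t₂, 1] - ![a, b, 2] = -![a.sign, b.sign, 0] := by
    ext i; fin_cases i <;> simp [ht₁, ht₂]
  rw [hv, map_neg_eq_map] at hhalf
  have hdiag := hN.max_mul_apply_sign_le ha0 hb0 2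
  have hk : (3 : ℝ) ≤ |(a : ℝ)| + |(b : ℝ)| - max |(a : ℝ)| |(b : ℝ)| := by
    have : (3 : ℤ) ≤ |a| + |b| - max |a| |b| := by omega
    exact_mod_cast this
  have hmax : (3 : ℝ) ≤ max |(a : ℝ)| |(b : ℝ)| := by exact_mod_cast le_max_of_le_left ha3
  push_cast at hhalf hdiag
  norm_num at hhalf hdiag
  have hzF : 2 * N ![0, 0, 1] ≤ N ![a, b, 2] + N ![a.sign, b.sign, 0] := by
    linarith [hN.z_le t₁ t₂]
  have key : (max |(a : ℝ)| |(b : ℝ)| + 1) * N ![0, 1, 0] ≤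
      (max |(a : ℝ)| |(b : ℝ)| + 1) * N ![a, b, 2] := by
    nlinarith [mul_le_mul_of_nonneg_left hzF (by positivity : (0 : ℝ) ≤ max |(a : ℝ)| |(b : ℝ)|),
      mul_nonneg (by linarith : (0 : ℝ) ≤ max |(a : ℝ)| |(b : ℝ)| - 1) (sub_nonneg.2 hN.y_le_z),
      mul_nonneg (by linarith : (0 : ℝ) ≤ |(a : ℝ)| + |(b : ℝ)| - max |(a : ℝ)| |(b : ℝ)| - 3)
        (apply_nonneg N ![0, 1, 0])]
  exact le_of_mul_le_mul_left key (by positivity)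

lemma z_le_apply_of_abs_eq_one_left (hN : IsReducedBasis N) {a b : ℤ} (ha : |a| = 1)
    (hb : 2 ≤ |b|) :
    N ![0, 0, 1] ≤ N ![a, b, 2] := by
  have hb0 : b ≠ 0 := by rintro rfl; simp at hb
  have h := N.mul_apply_le_add_residuals (abs_nonneg b) 0 b.sign 1 a b 2
  rw [abs_mul_sign_sub hb0 le_rfl, mul_zero, zero_sub, abs_neg, ha, mul_one,
    abs_of_nonneg (by omega : 0 ≤ |b| - 2)] at h
  have hz := mul_le_mul_of_nonneg_left (hN.z_le 0 b.sign) (by positivity : (0 : ℝ) ≤ |(b : ℝ)|)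
  push_cast at h
  linarith [hN.x_le_y, hN.y_le_z]

lemma z_le_apply_of_abs_eq_one_right (hN : IsReducedBasis N) {a b : ℤ} (ha : 2 ≤ |a|)
    (hb : |b| = 1) :
    N ![0, 0, 1] ≤ N ![a, b, 2] := by
  have ha0 : a ≠ 0 := by rintro rfl; simp at ha
  have h := N.mul_apply_le_add_residuals (abs_nonneg a) a.sign 0 1 a b 2
  rw [abs_mul_sign_sub ha0 le_rfl, mul_zero, zero_sub, abs_neg, hb, mul_one,
    abs_of_nonneg (by omega : 0 ≤ |a| - 2)] at h
  have hz := mul_le_mul_of_nonneg_left (hN.z_le a.sign 0) (by positivity : (0 : ℝ) ≤ |(a : ℝ)|)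
  push_cast at h
  linarith [hN.y_le_z]

lemma min_le_apply_of_odd (hN : IsReducedBasis N) {m : ℝ}
    (hm : ∀ a b : ℤ, |a| = 1 → |b| = 1 → m ≤ N ![a, b, 2]) {a b : ℤ} (ha : Odd a) (hb : Odd b) :
    min (N ![1, 0, 0]) m ≤ N ![a, b, 2] := by
  have hxz := hN.x_le_y.trans hN.y_le_z
  have odd_abs_cases : ∀ {x : ℤ}, Odd x → |x| = 1 ∨ 3 ≤ |x| := fun {x} hx => by
    obtain ⟨k, hk⟩ := odd_abs.2 hx
    have := abs_nonneg x
    omega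
  rcases odd_abs_cases ha with ha1 | ha3 <;> rcases odd_abs_cases hb with hb1 | hb3
  · exact (min_le_right _ _).trans (hm a b ha1 hb1)
  · exact (min_le_left _ _).trans (hxz.trans (hN.z_le_apply_of_abs_eq_one_left ha1 (by omega)))
  · exact (min_le_left _ _).trans (hxz.trans (hN.z_le_apply_of_abs_eq_one_right (by omega) hb1))
  · exact (min_le_left _ _).trans (hN.x_le_y.trans (hN.y_le_apply_of_odd ha hb ha3 hb3))

lemma z_le_apply_of_abs_add_abs_le (hN : IsReducedBasis N) {a b c α β : ℤ} (hc : 0 < c)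
    (h : |c * α - a| + |c * β - b| ≤ c - 1) : N ![0, 0, 1] ≤ N ![a, b, c] := by
  have hres := N.mul_apply_le_add_residuals hc.le α β 1 a b c
  rw [mul_one, sub_self, abs_zero] at hres
  have hz := mul_le_mul_of_nonneg_left (hN.z_le α β) (by positivity : (0 : ℝ) ≤ c)
  have h₁ := mul_le_mul_of_nonneg_left (hN.x_le_y.trans hN.y_le_z)
    (by positivity : (0 : ℝ) ≤ |((c * α - a : ℤ) : ℝ)|)
  have h₂ := mul_le_mul_of_nonneg_left hN.y_le_z
    (by positivity : (0 : ℝ) ≤ |((c * β - b : ℤ) : ℝ)|)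
  have h₃ := mul_le_mul_of_nonneg_right
    (by exact_mod_cast h : ((|c * α - a| + |c * β - b| : ℤ) : ℝ) ≤ ((c - 1 : ℤ) : ℝ))
    (apply_nonneg N ![0, 0, 1])
  push_cast at hres h₁ h₂ h₃
  linarith

lemma min_le_apply (hN : IsReducedBasis N) {m : ℝ}
    (hm : ∀ a b : ℤ, |a| = 1 → |b| = 1 → m ≤ N ![a, b, 2]) {a b c : ℤ}
    (hg : Int.gcd a (Int.gcd b c) = 1) : min (N ![1, 0, 0]) m ≤ N ![a, b, c] := by
  wlog hc : 0 ≤ c generalizing a b c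
  · have h := this (a := -a) (b := -b) (c := -c) (by simpa [Int.neg_gcd, Int.gcd_neg] using hg)
      (by omega)
    rwa [show ![-a, -b, -c] = -![a, b, c] by simp, map_neg_eq_map] at h
  have hxz := hN.x_le_y.trans hN.y_le_z
  rcases hc.eq_or_lt with rfl | hc
  · refine (min_le_left _ _).trans (hN.x_le_apply_of_ne_zero ?_)
    by_contra! hab
    simp [hab.1, hab.2] at hg
  by_cases hodd : c = 2 ∧ Odd a ∧ Odd b
  · obtain ⟨rfl, ha, hb⟩ := hodd
    exact hN.min_le_apply_of_odd hm ha hb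
  obtain ⟨α, β, h⟩ := exists_abs_add_abs_le hc hg hodd
  exact (min_le_left _ _).trans (hxz.trans (hN.z_le_apply_of_abs_add_abs_le hc h))

end IsReducedBasis

/-- Corollary: with `Δ_P(x) = l₁ ≤ Δ_P(y) = l₂ ≤ Δ_P(z) = l`, `Δ_P(x±y) ≥ l₂`, and
`Δ_P(ax + by + z) ≥ l` for all integers `a, b`, the lattice width of `P` equals
`min(l₁, m)`, where `m` is the minimum of `w_{(a,b,c)}(P)` over all `(a,b,c) ∈ ℤ³`
with `|a| = |b| = 1` and `|c| = 2`. -/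
theorem latticeWidth3_eq (V : Finset (Fin 3 → ℤ)) (hV : V.Nonempty)
    (P : Set (Fin 3 → ℝ)) (hP : P = latticePoly3 V) (l₁ l₂ l : ℤ)
    (h12 : l₁ ≤ l₂) (h2l : l₂ ≤ l)
    (hx : width3 P ![1, 0, 0] = (l₁ : ℝ)) (hy : width3 P ![0, 1, 0] = (l₂ : ℝ))
    (hz : width3 P ![0, 0, 1] = (l : ℝ))
    (hp : (l₂ : ℝ) ≤ width3 P ![1, 1, 0]) (hm : (l₂ : ℝ) ≤ width3 P ![1, -1, 0])
    (hall : ∀ a b : ℤ, (l : ℝ) ≤ width3 P ![a, b, 1])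
    (m : ℝ)
    (hmE : IsLeast
      {w : ℝ | ∃ a b c : ℤ, |a| = 1 ∧ |b| = 1 ∧ |c| = 2 ∧ width3 P ![a, b, c] = w} m) :
    IsLeast (widthSet3 P) (min (l₁ : ℝ) m) := by
  subst hP
  simp only [width3_latticePoly3 V hV] at *
  set N := widthSeminorm V hV
  have hN : IsReducedBasis N :=
    ⟨by rw [hx, hy]; exact_mod_cast h12, by rw [hy, hz]; exact_mod_cast h2l, hy ▸ hp, hy ▸ hm,
      hz ▸ hall⟩
  obtain ⟨⟨a₀, b₀, c₀, ha₀, -, -, rfl⟩, hmin⟩ := hmE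
  refine ⟨?_, ?_⟩
  · rcases min_choice (l₁ : ℝ) (N ![a₀, b₀, c₀]) with h | h <;> rw [h]
    · exact ⟨![1, 0, 0], by decide, width3_latticePoly3 V hV _ ▸ hx⟩
    · refine ⟨![a₀, b₀, c₀], ?_, width3_latticePoly3 V hV _⟩
      rw [Int.abs_eq_natAbs] at ha₀
      simp [Int.gcd, show a₀.natAbs = 1 by omega]
  · rintro _ ⟨d, hd, rfl⟩
    have hd3 : d = ![d 0, d 1, d 2] := by ext i; fin_cases i <;> rfl
    rw [← hx, width3_latticePoly3 V hV, hd3]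
    exact hN.min_le_apply (fun a b ha hb => hmin ⟨a, b, 2, ha, hb, by norm_num, rfl⟩) hd
end
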